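/- Fix disjoint finite sets V, U, a 'forbidden' bipartite graph X \subseteq V \times U, a degree sequence, and vertices v \in V and u, u' \in U with v u, v u' \notin X. Let B* (resp. B*') be the set of bipartite graphs G with the given degree sequence that contain X \cup {vu} (resp. X \cup {vu'}), do not contain vu' (resp. vu), and contain no path u w u' with w \in V, w > v (for a fixed linear order on V). For G \in B*, let a(G) be the number of w > v with wu' \in G and wu \notin G; for G' \in B*', let b(G') be the number of w > v with wu \in G' and wu' \notin G'. Then the switching operation (delete vu and wu', add vu' and wu) gives \sum_{G \in B*} a(G) = \sum_{G' \in B*'} b(G'), i.e., the double count of switchings is equal on both sides. -/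
import Mathlib

/-- Degree-sequence predicate for bipartite graphs on parts `(V, U)`. -/
def BipDeg {V U : Type*} [Fintype V] [Fintype U] [DecidableEq V] [DecidableEq U]
    (G : Finset (V × U)) (d : V → ℕ) (e : U → ℕ) : Prop :=
  (∀ v, (G.filter fun p => p.1 = v).card = d v) ∧
    (∀ u, (G.filter fun p => p.2 = u).card = e u)

section Aux

lemma card_filter_swap {α : Type*} [DecidableEq α] (G : Finset α) (a b c d : α)
    (ha : a ∈ G) (hc : c ∈ G) (hb : b ∉ G) (hd : d ∉ G) (hac : a ≠ c) (hbd : b ≠ d)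
    (P : α → Prop) [DecidablePred P]
    (hcnt : (if P a then 1 else 0) + (if P c then 1 else 0)
      = (if P b then 1 else 0) + (if P d then 1 else 0)) :
    ((insert b (insert d ((G.erase a).erase c))).filter P).card = (G.filter P).card := by
  classical
  set core := (G.erase a).erase c with hcore
  have hdcore : d ∉ core := fun h => hd (Finset.mem_of_mem_erase (Finset.mem_of_mem_erase h))
  have hbcore : b ∉ insert d core := by
    simp only [Finset.mem_insert]
    rintro (rfl | h)
    · exact hbd rfl
    · exact hb (Finset.mem_of_mem_erase (Finset.mem_of_mem_erase h))
  have hG : G = insert a (insert c core) := by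
    rw [hcore, Finset.insert_erase (Finset.mem_erase.mpr ⟨fun h => hac h.symm, hc⟩),
      Finset.insert_erase ha]
  have hacore : a ∉ insert c core := by
    simp only [Finset.mem_insert]
    rintro (rfl | h)
    · exact hac rfl
    · exact Finset.notMem_erase a G (Finset.mem_of_mem_erase h)
  have hccore : c ∉ core := Finset.notMem_erase c _
  rw [Finset.card_filter, Finset.card_filter, Finset.sum_insert hbcore,
    Finset.sum_insert hdcore]
  conv_rhs => rw [hG]
  rw [Finset.sum_insert hacore, Finset.sum_insert hccore]
  omega

variable {V U : Type*} [Fintype V] [Fintype U] [LinearOrder V] [DecidableEq U]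

def swapG (v w : V) (u u' : U) (G : Finset (V × U)) : Finset (V × U) :=
  insert (v, u') (insert (w, u) ((G.erase (v, u)).erase (w, u')))

lemma mem_swapG {v w : V} {u u' : U} {G : Finset (V × U)} {p : V × U} :
    p ∈ swapG v w u u' G ↔
      p = (v, u') ∨ p = (w, u) ∨ (p ∈ G ∧ p ≠ (v, u) ∧ p ≠ (w, u')) := by
  simp only [swapG, Finset.mem_insert, Finset.mem_erase]
  tauto

def Side (d : V → ℕ) (e : U → ℕ) (X : Finset (V × U)) (v : V) (u u' : U)
    (p : Finset (V × U) × V) : Prop :=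
  (BipDeg p.1 d e ∧ X ⊆ p.1 ∧ (v, u) ∈ p.1 ∧ (v, u') ∉ p.1 ∧
    ¬∃ w : V, v < w ∧ (w, u) ∈ p.1 ∧ (w, u') ∈ p.1) ∧
  (v < p.2 ∧ (p.2, u') ∈ p.1 ∧ (p.2, u) ∉ p.1)

lemma bipdeg_swap {d : V → ℕ} {e : U → ℕ} {G : Finset (V × U)} {v w : V} {u u' : U}
    (h1 : (v, u) ∈ G) (h2 : (v, u') ∉ G) (h3 : (w, u') ∈ G) (h4 : (w, u) ∉ G)
    (hvw : v ≠ w) (huu' : u ≠ u') (h : BipDeg G d e) :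
    BipDeg (swapG v w u u' G) d e := by
  obtain ⟨hd, he⟩ := h
  constructor
  · intro x
    rw [swapG, card_filter_swap G (v, u) (v, u') (w, u') (w, u) h1 h3 h2 h4
      (by simp [Prod.mk.injEq]; tauto) (by simp [Prod.mk.injEq]; tauto) _ (by simp)]
    exact hd x
  · intro x
    rw [swapG, card_filter_swap G (v, u) (v, u') (w, u') (w, u) h1 h3 h2 h4
      (by simp [Prod.mk.injEq]; tauto) (by simp [Prod.mk.injEq]; tauto) _ (by simp; omega)]
    exact he x

lemma forward {d : V → ℕ} {e : U → ℕ} {X : Finset (V × U)} {v : V} {u u' : U}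
    (huu' : u ≠ u') (hvu : (v, u) ∉ X) (hvu' : (v, u') ∉ X)
    (hX : ∀ w : V, v < w → (w, u) ∉ X ∧ (w, u') ∉ X)
    {G : Finset (V × U)} {w : V} (h : Side d e X v u u' (G, w)) :
    Side d e X v u' u (swapG v w u u' G, w) := by
  obtain ⟨⟨hdeg, hXG, h1, h2, h5⟩, hvw, h3, h4⟩ := h
  have hvw' : v ≠ w := ne_of_lt hvw
  constructor
  · refine ⟨bipdeg_swap h1 h2 h3 h4 hvw' huu' hdeg, ?_, ?_, ?_, ?_⟩
    · intro x hx
      rw [mem_swapG]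
      refine Or.inr (Or.inr ⟨hXG hx, ?_, ?_⟩)
      · rintro rfl; exact hvu hx
      · rintro rfl; exact (hX w hvw).2 hx
    · rw [mem_swapG]; left; rfl
    · rw [mem_swapG]
      rintro (h | h | ⟨-, h, -⟩)
      · exact huu' (congrArg Prod.snd h)
      · exact hvw' (congrArg Prod.fst h)
      · exact h rfl
    · rintro ⟨w', hw', hw'u', hw'u⟩
      rw [mem_swapG] at hw'u' hw'u
      have hw'v : w' ≠ v := ne_of_gt hw'
      rcases hw'u' with h' | h' | ⟨h'G, -, h'ne⟩
      · exact hw'v (congrArg Prod.fst h')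
      · exact huu' (congrArg Prod.snd h').symm
      · have hw'w : w' ≠ w := fun h => h'ne (by rw [h])
        rcases hw'u with h'' | h'' | ⟨h''G, -, -⟩
        · exact huu' (congrArg Prod.snd h'')
        · exact hw'w (congrArg Prod.fst h'')
        · exact h5 ⟨w', hw', h''G, h'G⟩
  · refine ⟨hvw, ?_, ?_⟩
    · rw [mem_swapG]; right; left; rfl
    · rw [mem_swapG]
      rintro (h | h | ⟨-, -, h⟩)
      · exact hvw' (congrArg Prod.fst h).symm
      · exact huu' (congrArg Prod.snd h).symm
      · exact h rfl

lemma swap_invol {v w : V} {u u' : U} {G : Finset (V × U)}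
    (h1 : (v, u) ∈ G) (h2 : (v, u') ∉ G) (h3 : (w, u') ∈ G) (h4 : (w, u) ∉ G)
    (hvw : v ≠ w) (huu' : u ≠ u') :
    swapG v w u' u (swapG v w u u' G) = G := by
  ext ⟨p1, p2⟩
  rw [mem_swapG, mem_swapG]
  simp only [Prod.mk.injEq]
  by_cases hv : p1 = v <;> by_cases hw : p1 = w <;>
    by_cases hu : p2 = u <;> by_cases hu' : p2 = u' <;>
    subst_vars <;> simp_all

end Aux

/-- Double counting of switchings: the number of pairs `(G, w)` with
`G ∈ B*` and `w` a valid switching parameter equals the number of pairs `(G', w)` with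
`G' ∈ B*'` and `w` a valid reverse-switching parameter. -/
theorem switching_double_count {V U : Type*}
    [Fintype V] [Fintype U] [LinearOrder V] [DecidableEq U]
    (d : V → ℕ) (e : U → ℕ) (X : Finset (V × U)) (v : V) (u u' : U)
    (huu' : u ≠ u') (hvu : (v, u) ∉ X) (hvu' : (v, u') ∉ X)
    (hX : ∀ w : V, v < w → (w, u) ∉ X ∧ (w, u') ∉ X) :
    Nat.card {p : Finset (V × U) × V //
        (BipDeg p.1 d e ∧ X ⊆ p.1 ∧ (v, u) ∈ p.1 ∧ (v, u') ∉ p.1 ∧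
          ¬∃ w : V, v < w ∧ (w, u) ∈ p.1 ∧ (w, u') ∈ p.1) ∧
        (v < p.2 ∧ (p.2, u') ∈ p.1 ∧ (p.2, u) ∉ p.1)}
      = Nat.card {p : Finset (V × U) × V //
        (BipDeg p.1 d e ∧ X ⊆ p.1 ∧ (v, u') ∈ p.1 ∧ (v, u) ∉ p.1 ∧
          ¬∃ w : V, v < w ∧ (w, u) ∈ p.1 ∧ (w, u') ∈ p.1) ∧
        (v < p.2 ∧ (p.2, u) ∈ p.1 ∧ (p.2, u') ∉ p.1)} := by
  have hX' : ∀ w : V, v < w → (w, u') ∉ X ∧ (w, u) ∉ X := fun w hw => (hX w hw).symm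
  have eL : ∀ p : Finset (V × U) × V,
      ((BipDeg p.1 d e ∧ X ⊆ p.1 ∧ (v, u) ∈ p.1 ∧ (v, u') ∉ p.1 ∧
          ¬∃ w : V, v < w ∧ (w, u) ∈ p.1 ∧ (w, u') ∈ p.1) ∧
        (v < p.2 ∧ (p.2, u') ∈ p.1 ∧ (p.2, u) ∉ p.1)) ↔ Side d e X v u u' p := fun p =>
    Iff.rfl
  have eR : ∀ p : Finset (V × U) × V,
      ((BipDeg p.1 d e ∧ X ⊆ p.1 ∧ (v, u') ∈ p.1 ∧ (v, u) ∉ p.1 ∧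
          ¬∃ w : V, v < w ∧ (w, u) ∈ p.1 ∧ (w, u') ∈ p.1) ∧
        (v < p.2 ∧ (p.2, u) ∈ p.1 ∧ (p.2, u') ∉ p.1)) ↔ Side d e X v u' u p := by
    intro p
    unfold Side
    constructor
    · rintro ⟨⟨a, b, c, c', np⟩, rest⟩
      exact ⟨⟨a, b, c, c', fun ⟨w, hw, hwu', hwu⟩ => np ⟨w, hw, hwu, hwu'⟩⟩, rest⟩
    · rintro ⟨⟨a, b, c, c', np⟩, rest⟩
      exact ⟨⟨a, b, c, c', fun ⟨w, hw, hwu, hwu'⟩ => np ⟨w, hw, hwu', hwu⟩⟩, rest⟩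
  apply Nat.card_congr
  refine (Equiv.subtypeEquivRight eL).trans
    ((?_ : {p : Finset (V × U) × V // Side d e X v u u' p} ≃
      {p : Finset (V × U) × V // Side d e X v u' u p}).trans
      (Equiv.subtypeEquivRight eR).symm)
  refine
    { toFun := fun q => ⟨(swapG v q.1.2 u u' q.1.1, q.1.2), forward huu' hvu hvu' hX q.2⟩
      invFun := fun q => ⟨(swapG v q.1.2 u' u q.1.1, q.1.2),
        forward huu'.symm hvu' hvu hX' q.2⟩
      left_inv := ?_
      right_inv := ?_ }
  · rintro ⟨⟨G, w⟩, h⟩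
    obtain ⟨⟨_, _, h1, h2, _⟩, hvw, h3, h4⟩ := h
    exact Subtype.ext (Prod.ext (swap_invol h1 h2 h3 h4 (ne_of_lt hvw) huu') rfl)
  · rintro ⟨⟨G, w⟩, h⟩
    obtain ⟨⟨_, _, h1, h2, _⟩, hvw, h3, h4⟩ := h
    exact Subtype.ext (Prod.ext (swap_invol h1 h2 h3 h4 (ne_of_lt hvw) huu'.symm) rfl)
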